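/- arXiv:1709.02168 — 3 statements merged into one kernel-verified Lean document; each statement's English description precedes it below -/
import Mathlib

section
/- Vanishing of the strong converse exponent above the common information: if R ≥ C_Wyner(X;Y), then F(R) = 0, where F(R) is the strong converse exponent defined below. -/
open Filter

noncomputable section

/-- `P` is a probability mass function on the finite type `α`. -/
def IsPMF {α : Type*} [Fintype α] (P : α → ℝ) : Prop :=
  (∀ a, 0 ≤ P a) ∧ (∑ a, P a) = 1

/-- Rényi divergence of order `1 + s` (natural logarithm), `EReal`-valued.
For `s ≥ 0` it is `⊤` when `supp P ⊄ supp Q`; for `s = 0` it is the relative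
entropy; otherwise it is `(1/s) log ∑_{x ∈ supp P} P(x)^{1+s} Q(x)^{-s}`. -/
def renyiDiv {α : Type*} [Fintype α] (s : ℝ) (P Q : α → ℝ) : EReal :=
  if 0 ≤ s ∧ ∃ a, 0 < P a ∧ Q a = 0 then ⊤
  else if s = 0 then
    (((∑ a ∈ Finset.univ.filter (fun a => 0 < P a), P a * Real.log (P a / Q a)) : ℝ) : EReal)
  else
    ((((1 / s) * Real.log (∑ a ∈ Finset.univ.filter (fun a => 0 < P a),
        P a ^ (1 + s) * Q a ^ (-s))) : ℝ) : EReal)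

/-- Mutual information `I(XY; W)` of a joint distribution on `(X × Y) × W`. -/
def mutualInfoW {X Y W : Type*} [Fintype X] [Fintype Y] [Fintype W] (P : X × Y × W → ℝ) : ℝ :=
  ∑ z ∈ Finset.univ.filter (fun z : X × Y × W => 0 < P z),
    P z * Real.log (P z /
      ((∑ w, P (z.1, z.2.1, w)) * (∑ p : X × Y, P (p.1, p.2, z.2.2))))

/-- The Markov chain condition `X − W − Y`. -/
def IsMarkovXWY {X Y W : Type*} [Fintype X] [Fintype Y] [Fintype W] (P : X × Y × W → ℝ) : Prop :=
  ∀ x y w, P (x, y, w) * (∑ p : X × Y, P (p.1, p.2, w)) =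
    (∑ y', P (x, y', w)) * (∑ x', P (x', y, w))

/-- Wyner's common information of the target distribution `π` on `X × Y`. -/
def CWyner {X Y : Type*} [Fintype X] [Fintype Y] (π : X × Y → ℝ) : ℝ :=
  sInf { r | ∃ P : X × Y × Fin (Fintype.card X * Fintype.card Y) → ℝ,
    IsPMF P ∧ (∀ x y, (∑ w, P (x, y, w)) = π (x, y)) ∧ IsMarkovXWY P ∧ r = mutualInfoW P }

/-- The message set size `⌈e^{nR}⌉` of a rate-`R` synthesis code at blocklength `n`. -/
def numMsgs (R : ℝ) (n : ℕ) : ℕ := ⌈Real.exp (n * R)⌉₊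

/-- A synthesis code: a pair of conditional distributions from the message set to
`X^n` and `Y^n` respectively. -/
structure SynthCode (X Y : Type*) [Fintype X] [Fintype Y] (M n : ℕ) where
  PX : Fin M → (Fin n → X) → ℝ
  PY : Fin M → (Fin n → Y) → ℝ
  PX_pmf : ∀ m, IsPMF (PX m)
  PY_pmf : ∀ m, IsPMF (PY m)

/-- The distribution `P_{X^n Y^n}` induced by a synthesis code. -/
def SynthCode.induced {X Y : Type*} [Fintype X] [Fintype Y] {M n : ℕ}
    (c : SynthCode X Y M n) : (Fin n → X) × (Fin n → Y) → ℝ :=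
  fun z => (M : ℝ)⁻¹ * ∑ m, c.PX m z.1 * c.PY m z.2

/-- The `n`-fold product distribution `π^{⊗ n}` on `X^n × Y^n`. -/
def prodDist {X Y : Type*} [Fintype X] [Fintype Y] (π : X × Y → ℝ) (n : ℕ) :
    (Fin n → X) × (Fin n → Y) → ℝ :=
  fun z => ∏ i, π (z.1 i, z.2 i)

/-- Total variation distance between two distributions on a finite type. -/
def tvDist {α : Type*} [Fintype α] (P Q : α → ℝ) : ℝ :=
  (∑ a, |P a - Q a|) / 2

/-- Marginal `Q_U` of a distribution on `X × Y × U`. -/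
def margU {X Y U : Type*} [Fintype X] [Fintype Y] [Fintype U] (Q : X × Y × U → ℝ) (u : U) : ℝ :=
  ∑ p : X × Y, Q (p.1, p.2, u)

/-- Marginal `Q_{XU}` of a distribution on `X × Y × U`. -/
def margXU {X Y U : Type*} [Fintype X] [Fintype Y] [Fintype U] (Q : X × Y × U → ℝ)
    (x : X) (u : U) : ℝ := ∑ y, Q (x, y, u)

/-- Marginal `Q_{YU}` of a distribution on `X × Y × U`. -/
def margYU {X Y U : Type*} [Fintype X] [Fintype Y] [Fintype U] (Q : X × Y × U → ℝ)
    (y : Y) (u : U) : ℝ := ∑ x, Q (x, y, u)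

/-- Marginal `Q_{XY}` of a distribution on `X × Y × U`. -/
def margXY {X Y U : Type*} [Fintype X] [Fintype Y] [Fintype U] (Q : X × Y × U → ℝ)
    (x : X) (y : Y) : ℝ := ∑ u, Q (x, y, u)

/-- The set `𝒬` of distributions `Q_{XYU}` on `X × Y × U` (with `|U| = |X||Y|`)
whose `X × Y` marginal is supported inside `supp π`. -/
def QClass {X Y : Type*} [Fintype X] [Fintype Y] (π : X × Y → ℝ) :
    Set (X × Y × Fin (Fintype.card X * Fintype.card Y) → ℝ) :=
  { Q | IsPMF Q ∧ ∀ x y, 0 < margXY Q x y → 0 < π (x, y) }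

/-- The linear combination of likelihood ratios `ω^{(α)}_{Q_{XYU}}(x,y|u)`:
`ᾱ ( log (Q_{XY}/π) + log (Q_{XY|U}/(Q_{X|U}Q_{Y|U})) ) + α log (Q_{XY|U}/π)`. -/
def omegaFn {X Y U : Type*} [Fintype X] [Fintype Y] [Fintype U] (π : X × Y → ℝ) (α : ℝ)
    (Q : X × Y × U → ℝ) (z : X × Y × U) : ℝ :=
  (1 - α) * (Real.log (margXY Q z.1 z.2.1 / π (z.1, z.2.1)) +
      Real.log (Q z * margU Q z.2.2 / (margXU Q z.1 z.2.2 * margYU Q z.2.1 z.2.2))) +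
    α * Real.log (Q z / (margU Q z.2.2 * π (z.1, z.2.1)))

/-- The negative cumulant generating function `Ω^{(α,θ)}(Q_{XYU})`. -/
def OmegaQ {X Y U : Type*} [Fintype X] [Fintype Y] [Fintype U] (π : X × Y → ℝ) (α θ : ℝ)
    (Q : X × Y × U → ℝ) : ℝ :=
  -Real.log (∑ z ∈ Finset.univ.filter (fun z : X × Y × U => 0 < Q z),
    Q z * Real.exp (-(θ * omegaFn π α Q z)))

/-- The minimized negative cumulant generating function `Ω^{(α,θ)}`. -/
def OmegaMin {X Y : Type*} [Fintype X] [Fintype Y] (π : X × Y → ℝ) (α θ : ℝ) : ℝ :=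
  sInf { r | ∃ Q ∈ QClass π, r = OmegaQ π α θ Q }

/-- The exponent `F^{(α,θ)}(R) = (Ω^{(α,θ)} − θαR)/(1 + (5−3α)θ)`. -/
def Fat {X Y : Type*} [Fintype X] [Fintype Y] (π : X × Y → ℝ) (α θ R : ℝ) : ℝ :=
  (OmegaMin π α θ - θ * α * R) / (1 + (5 - 3 * α) * θ)

/-- The strong converse exponent `F(R) = sup_{(α,θ) ∈ [0,1]×[0,∞)} F^{(α,θ)}(R)`. -/
def Fexp {X Y : Type*} [Fintype X] [Fintype Y] (π : X × Y → ℝ) (R : ℝ) : ℝ :=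
  sSup { r | ∃ α ∈ Set.Icc (0 : ℝ) 1, ∃ θ ∈ Set.Ici (0 : ℝ), r = Fat π α θ R }

/-! At `α = θ = 0` the exponent `F^{(0,0)}(R)` is `0`. Conversely, for a coupling `P_{XYW}` of `π`
with `X − W − Y`, both likelihood ratios in the `ᾱ`-part of `ω^{(α)}_P` equal `1`, so `ω^{(α)}_P`
has `P`-mean `α I(XY;W)` and Jensen's inequality for `exp` gives `Ω^{(α,θ)}(P) ≤ θα I(XY;W)`.
Minimising over such couplings, `Ω^{(α,θ)} ≤ θα C_Wyner(X;Y) ≤ θαR`, so no `F^{(α,θ)}(R)` is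
positive. -/

open Finset

theorem sum_mul_le_log_sum_mul_exp {ι : Type*} (s : Finset ι) (w g : ι → ℝ)
    (hw : ∀ i ∈ s, 0 ≤ w i) (hw1 : ∑ i ∈ s, w i = 1) :
    ∑ i ∈ s, w i * g i ≤ Real.log (∑ i ∈ s, w i * Real.exp (g i)) := by
  have h := convexOn_exp.map_sum_le hw hw1 (fun i _ => Set.mem_univ (g i))
  simp only [smul_eq_mul] at h
  simpa only [Real.log_exp] using Real.log_le_log (Real.exp_pos _) h

theorem sInf_le_sInf_of_forall_exists_le_of_nonneg {A B : Set ℝ} (hB : B.Nonempty)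
    (hB0 : ∀ b ∈ B, 0 ≤ b) (h : ∀ b ∈ B, ∃ a ∈ A, a ≤ b) : sInf A ≤ sInf B := by
  by_cases hA : BddBelow A
  · refine le_csInf hB fun b hb => ?_
    obtain ⟨a, ha, hab⟩ := h b hb
    exact (csInf_le hA ha).trans hab
  · rw [Real.sInf_of_not_bddBelow hA]
    exact Real.sInf_nonneg hB0

theorem IsPMF.sum_filter_pos {α : Type*} [Fintype α] {P : α → ℝ} (hP : IsPMF P) :
    ∑ a ∈ univ.filter (fun a => 0 < P a), P a = 1 :=
  (sum_filter_of_ne fun a _ ha => (hP.1 a).lt_of_ne' ha).trans hP.2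

section Couplings

variable {X Y W : Type*} [Fintype X] [Fintype Y] [Fintype W]

theorem sum_triple_eq_sum_sum {M : Type*} [AddCommMonoid M] (f : X × Y × W → M) :
    ∑ z, f z = ∑ p : X × Y, ∑ w, f (p.1, p.2, w) := by
  rw [← (Equiv.prodAssoc X Y W).sum_comp, Fintype.sum_prod_type]
  rfl

theorem IsPMF.sum_mul_marginals {P : X × Y × W → ℝ} (hP : IsPMF P) :
    ∑ z : X × Y × W, (∑ w, P (z.1, z.2.1, w)) * ∑ p : X × Y, P (p.1, p.2, z.2.2) = 1 := by
  have hXY : ∑ p : X × Y, ∑ w, P (p.1, p.2, w) = 1 := (sum_triple_eq_sum_sum P).symm.trans hP.2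
  have hW : ∑ w, ∑ p : X × Y, P (p.1, p.2, w) = 1 := by rw [Finset.sum_comm, hXY]
  simp only [sum_triple_eq_sum_sum, ← Finset.mul_sum, hW, mul_one, hXY]

theorem mutualInfoW_nonneg {P : X × Y × W → ℝ} (hP : IsPMF P) : 0 ≤ mutualInfoW P := by
  set S := univ.filter (fun z : X × Y × W => 0 < P z)
  set q : X × Y × W → ℝ := fun z => (∑ w, P (z.1, z.2.1, w)) * ∑ p : X × Y, P (p.1, p.2, z.2.2)
  have hq0 : ∀ z, 0 ≤ q z := fun z =>
    mul_nonneg (sum_nonneg fun _ _ => hP.1 _) (sum_nonneg fun _ _ => hP.1 _)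
  have hqpos : ∀ z ∈ S, 0 < q z := by
    intro z hz
    have hPz : 0 < P z := (mem_filter.1 hz).2
    exact mul_pos (hPz.trans_le (single_le_sum (f := fun w => P (z.1, z.2.1, w))
        (fun w _ => hP.1 _) (mem_univ z.2.2)))
      (hPz.trans_le (single_le_sum (f := fun p : X × Y => P (p.1, p.2, z.2.2))
        (fun p _ => hP.1 _) (mem_univ (z.1, z.2.1))))
  have hjensen := sum_mul_le_log_sum_mul_exp S P (fun z => Real.log (q z / P z))
    (fun z _ => hP.1 z) hP.sum_filter_pos
  have hexp : ∑ z ∈ S, P z * Real.exp (Real.log (q z / P z)) = ∑ z ∈ S, q z := by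
    refine sum_congr rfl fun z hz => ?_
    rw [Real.exp_log (div_pos (hqpos z hz) (mem_filter.1 hz).2),
      mul_div_cancel₀ _ (mem_filter.1 hz).2.ne']
  have hqS : ∑ z ∈ S, q z ≤ 1 :=
    hP.sum_mul_marginals ▸ sum_le_sum_of_subset_of_nonneg (filter_subset _ _) fun z _ _ => hq0 z
  have hlog : ∀ z ∈ S, P z * Real.log (q z / P z) = -(P z * Real.log (P z / q z)) := by
    intro z _
    rw [← inv_div, Real.log_inv, mul_neg]
  rw [hexp, sum_congr rfl hlog, sum_neg_distrib] at hjensen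
  have := hjensen.trans (Real.log_nonpos (sum_nonneg fun z _ => hq0 z) hqS)
  unfold mutualInfoW
  linarith

theorem exists_isMarkovXWY_coupling (e : X × Y ≃ W) {π : X × Y → ℝ} (hπ : IsPMF π) :
    ∃ P : X × Y × W → ℝ, IsPMF P ∧ (∀ x y, ∑ w, P (x, y, w) = π (x, y)) ∧ IsMarkovXWY P := by
  classical
  set P : X × Y × W → ℝ := fun z => if z.2.2 = e (z.1, z.2.1) then π (z.1, z.2.1) else 0
  have hmarg : ∀ x y, ∑ w, P (x, y, w) = π (x, y) := by simp [P]
  refine ⟨P, ⟨fun z => ?_, ?_⟩, hmarg, fun x y w => ?_⟩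
  · dsimp only [P]
    split_ifs
    exacts [hπ.1 _, le_rfl]
  · simpa only [sum_triple_eq_sum_sum, hmarg] using hπ.2
  · obtain ⟨⟨a, b⟩, rfl⟩ := e.surjective w
    by_cases hx : x = a <;> by_cases hy : y = b <;> simp [P, hx, hy, eq_comm]

variable {π : X × Y → ℝ} {P : X × Y × W → ℝ}

theorem omegaFn_eq_of_isMarkovXWY (hP : ∀ z, 0 ≤ P z) (hπ : ∀ x y, ∑ w, P (x, y, w) = π (x, y))
    (hmk : IsMarkovXWY P) (α : ℝ) {z : X × Y × W} (hz : 0 < P z) :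
    omegaFn π α P z =
      α * Real.log (P z / ((∑ w, P (z.1, z.2.1, w)) * ∑ p : X × Y, P (p.1, p.2, z.2.2))) := by
  obtain ⟨x, y, w⟩ := z
  have hXW : 0 < margXU P x w :=
    hz.trans_le (single_le_sum (f := fun y' => P (x, y', w)) (fun _ _ => hP _) (mem_univ y))
  have hYW : 0 < margYU P y w :=
    hz.trans_le (single_le_sum (f := fun x' => P (x', y, w)) (fun _ _ => hP _) (mem_univ x))
  have hπxy : 0 < π (x, y) := hπ x y ▸
    hz.trans_le (single_le_sum (f := fun w' => P (x, y, w')) (fun _ _ => hP _) (mem_univ w))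
  have hXY : margXY P x y / π (x, y) = 1 := by rw [margXY, hπ, div_self hπxy.ne']
  have hcond : P (x, y, w) * margU P w / (margXU P x w * margYU P y w) = 1 := by
    rw [margU, hmk x y w]
    exact div_self (mul_pos hXW hYW).ne'
  rw [omegaFn, hXY, hcond, Real.log_one, margU, hπ, mul_comm (π (x, y))]
  ring

theorem OmegaQ_le_mul_mutualInfoW (hP : IsPMF P) (hπ : ∀ x y, ∑ w, P (x, y, w) = π (x, y))
    (hmk : IsMarkovXWY P) (α θ : ℝ) : OmegaQ π α θ P ≤ θ * α * mutualInfoW P := by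
  have hjensen := sum_mul_le_log_sum_mul_exp (univ.filter fun z => 0 < P z) P
    (fun z => -(θ * omegaFn π α P z)) (fun z _ => hP.1 z) hP.sum_filter_pos
  have hmean : ∑ z ∈ univ.filter (fun z => 0 < P z), P z * -(θ * omegaFn π α P z) =
      -(θ * α * mutualInfoW P) := by
    rw [mutualInfoW, mul_sum, ← sum_neg_distrib]
    refine sum_congr rfl fun z hz => ?_
    rw [omegaFn_eq_of_isMarkovXWY hP.1 hπ hmk α (mem_filter.1 hz).2]
    ring
  unfold OmegaQ
  linarith

end Couplings

section Exponent

variable {X Y : Type*} [Fintype X] [Fintype Y]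

theorem OmegaMin_zero_zero (π : X × Y → ℝ) : OmegaMin π 0 0 = 0 := by
  have hsub : { r | ∃ Q ∈ QClass π, r = OmegaQ π 0 0 Q } ⊆ {0} := by
    rintro _ ⟨Q, hQ, rfl⟩
    simp [OmegaQ, hQ.1.sum_filter_pos]
  rcases Set.subset_singleton_iff_eq.1 hsub with h | h <;> simp [OmegaMin, h]

theorem OmegaMin_le_mul_CWyner {π : X × Y → ℝ} (hπ : IsPMF π) {α θ : ℝ} (hα : 0 ≤ α)
    (hθ : 0 ≤ θ) : OmegaMin π α θ ≤ θ * α * CWyner π := by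
  have hθα := mul_nonneg hθ hα
  obtain ⟨P₀, hP₀⟩ := exists_isMarkovXWY_coupling
    ((Fintype.equivFin (X × Y)).trans (finCongr (Fintype.card_prod X Y))) hπ
  rw [CWyner, ← smul_eq_mul, ← Real.sInf_smul_of_nonneg hθα]
  refine sInf_le_sInf_of_forall_exists_le_of_nonneg
    ⟨_, Set.smul_mem_smul_set ⟨P₀, hP₀.1, hP₀.2.1, hP₀.2.2, rfl⟩⟩ ?_ ?_
  · rintro _ ⟨_, ⟨P, hP, -, -, rfl⟩, rfl⟩
    exact mul_nonneg hθα (mutualInfoW_nonneg hP)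
  · rintro _ ⟨_, ⟨P, hP, hπP, hmk, rfl⟩, rfl⟩
    exact ⟨_, ⟨P, ⟨hP, fun x y hxy => hπP x y ▸ hxy⟩, rfl⟩,
      OmegaQ_le_mul_mutualInfoW hP hπP hmk α θ⟩

end Exponent

/-- Vanishing of the strong converse exponent above the common information:
if `R ≥ C_Wyner(X;Y)` then `F(R) = 0`. -/
theorem strong_converse_exponent_zero
    {X Y : Type*} [Fintype X] [Fintype Y] (π : X × Y → ℝ) (hπ : IsPMF π)
    (R : ℝ) (hR : CWyner π ≤ R) :
    Fexp π R = 0 := by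
  refine IsGreatest.csSup_eq ⟨⟨0, ⟨le_rfl, zero_le_one⟩, 0, Set.self_mem_Ici, ?_⟩, ?_⟩
  · simp [Fat, OmegaMin_zero_zero]
  · rintro _ ⟨α, ⟨hα0, hα1⟩, θ, (hθ : 0 ≤ θ), rfl⟩
    have hΩ := OmegaMin_le_mul_CWyner hπ hα0 hθ
    have hRθα := mul_le_mul_of_nonneg_left hR (mul_nonneg hθ hα0)
    exact div_nonpos_of_nonpos_of_nonneg (by linarith) (by nlinarith)
end
end

section
/- Non-asymptotic information-spectrum converse: suppose (1/n) log|ℳ_n| ≤ R and P(Ã) > 0. Then |P_{X^nY^n} − π_{X^nY^n}| ≥ 1 − P( 𝒜₁ ∩ 𝒜₂ ∩ 𝒜₃ | Ã ) − 3 e^{−nη}, where P(·|Ã) denotes the law of (X^n,Y^n,M_n) ∼ P_{M_nX^nY^n} conditioned on the event (X^n,Y^n,M_n) ∈ Ã. -/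
open Filter

noncomputable section

/-- The probability that `P` assigns to the set `S`. -/
def prSet {γ : Type*} [Fintype γ] (P : γ → ℝ) (S : Set γ) : ℝ :=
  ∑ z, S.indicator P z

/-- The joint distribution `P_{M_n X^n Y^n}` induced by a synthesis code. -/
def SynthCode.joint {X Y : Type*} [Fintype X] [Fintype Y] {M n : ℕ}
    (c : SynthCode X Y M n) : Fin M × (Fin n → X) × (Fin n → Y) → ℝ :=
  fun t => (M : ℝ)⁻¹ * (c.PX t.1 t.2.1 * c.PY t.1 t.2.2)

/-!
Off a `P_{M X^n Y^n}`-null set, a triple outside `𝒜₁ ∩ 𝒜₂ ∩ 𝒜₃ ∩ Ã` satisfies one of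
`P_{X^n|M} P_{Y^n|M} ≤ e^{-nη} Q_{X^nY^n|M}`, `π ≤ e^{-nη} Q_{X^nY^n}` or
`π ≤ e^{-nη} Q̄` with `Q̄ := |ℳ|⁻¹ ∑_m Q_{X^nY^n|M=m}` (the last one because `|ℳ| ≤ e^{nR}`).
Each of these events has probability at most `e^{-nη}` under the left-hand distribution
(change of measure); the two events on `(x^n, y^n)` are transferred from `π` to
`P_{X^nY^n}` at the cost of the total variation distance, and conditioning on `Ã` can only
increase the probability of the good event.
-/

section prSet

variable {α : Type*} [Fintype α] {P Q : α → ℝ}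

lemma prSet_nonneg (hP : ∀ a, 0 ≤ P a) (S : Set α) : 0 ≤ prSet P S :=
  Finset.sum_nonneg fun a _ => Set.indicator_nonneg (fun a _ => hP a) a

lemma prSet_le_sum (hP : ∀ a, 0 ≤ P a) (S : Set α) : prSet P S ≤ ∑ a, P a :=
  Finset.sum_le_sum fun a _ => Set.indicator_le_self' (fun a _ => hP a) a

lemma prSet_add_prSet_compl (P : α → ℝ) (S : Set α) :
    prSet P S + prSet P Sᶜ = ∑ a, P a := by
  rw [prSet, prSet, ← Finset.sum_add_distrib]
  exact Finset.sum_congr rfl fun a _ => congrFun (S.indicator_self_add_compl P) a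

lemma prSet_union_le (hP : ∀ a, 0 ≤ P a) (S T : Set α) :
    prSet P (S ∪ T) ≤ prSet P S + prSet P T := by
  rw [prSet, prSet, prSet, ← Finset.sum_add_distrib]
  refine Finset.sum_le_sum fun a _ => ?_
  have hsum := congrFun (Set.indicator_union_add_inter P S T) a
  have hinter := Set.indicator_nonneg (s := S ∩ T) (fun a _ => hP a) a
  simp only [Pi.add_apply] at hsum
  linarith

lemma prSet_le_prSet_of_ne_zero (hP : ∀ a, 0 ≤ P a) {S T : Set α}
    (h : ∀ a ∈ S, P a ≠ 0 → a ∈ T) : prSet P S ≤ prSet P T := by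
  refine Finset.sum_le_sum fun a _ => ?_
  have hT := Set.indicator_nonneg (s := T) (fun a _ => hP a) a
  by_cases haS : a ∈ S
  · by_cases hPa : P a = 0
    · rwa [Set.indicator_of_mem haS, hPa]
    · rw [Set.indicator_of_mem haS, Set.indicator_of_mem (h a haS hPa)]
  · rwa [Set.indicator_of_notMem haS]

lemma prSet_le_of_le_mul (hQ : IsPMF Q) {c : ℝ} (hc : 0 ≤ c) {S : Set α}
    (h : ∀ a ∈ S, P a ≤ c * Q a) : prSet P S ≤ c :=
  calc prSet P S ≤ ∑ a, c * Q a := Finset.sum_le_sum fun a _ => by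
        by_cases ha : a ∈ S
        · rw [Set.indicator_of_mem ha]; exact h a ha
        · rw [Set.indicator_of_notMem ha]; exact mul_nonneg hc (hQ.1 a)
    _ = c := by rw [← Finset.mul_sum, hQ.2, mul_one]

lemma prSet_sub_prSet_le_tvDist (hsum : ∑ a, P a = ∑ a, Q a) (S : Set α) :
    prSet P S - prSet Q S ≤ tvDist P Q := by
  have hpos : ∀ a, S.indicator P a - S.indicator Q a ≤ (|P a - Q a| + (P a - Q a)) / 2 := by
    intro a
    by_cases ha : a ∈ S
    · rw [Set.indicator_of_mem ha, Set.indicator_of_mem ha]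
      linarith [le_abs_self (P a - Q a)]
    · rw [Set.indicator_of_notMem ha, Set.indicator_of_notMem ha]
      linarith [neg_abs_le (P a - Q a)]
  have hzero : ∑ a, (P a - Q a) = 0 := by rw [Finset.sum_sub_distrib, hsum, sub_self]
  calc prSet P S - prSet Q S = ∑ a, (S.indicator P a - S.indicator Q a) := by
        rw [prSet, prSet, Finset.sum_sub_distrib]
    _ ≤ ∑ a, (|P a - Q a| + (P a - Q a)) / 2 := Finset.sum_le_sum fun a _ => hpos a
    _ = tvDist P Q := by rw [← Finset.sum_div, Finset.sum_add_distrib, hzero, add_zero, tvDist]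

lemma prSet_preimage_snd {β γ : Type*} [Fintype β] [Fintype γ] (P : β × γ → ℝ) (S : Set γ) :
    prSet P {t | t.2 ∈ S} = prSet (fun z => ∑ b, P (b, z)) S := by
  rw [prSet, prSet, Fintype.sum_prod_type_right]
  refine Finset.sum_congr rfl fun z _ => ?_
  by_cases hz : z ∈ S <;> simp [hz]

end prSet

section IsPMF

variable {α β : Type*} [Fintype α] [Fintype β]

lemma IsPMF.prod {P : α → ℝ} {Q : β → ℝ} (hP : IsPMF P) (hQ : IsPMF Q) :
    IsPMF fun z : α × β => P z.1 * Q z.2 :=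
  ⟨fun z => mul_nonneg (hP.1 _) (hQ.1 _), by
    rw [Fintype.sum_prod_type, ← Finset.sum_mul_sum, hP.2, hQ.2, mul_one]⟩

lemma IsPMF.uniformMixture {M : ℕ} (hM : 0 < M) {K : Fin M → β → ℝ} (hK : ∀ m, IsPMF (K m)) :
    IsPMF fun t : Fin M × β => (M : ℝ)⁻¹ * K t.1 t.2 := by
  refine ⟨fun t => mul_nonneg (by positivity) ((hK t.1).1 _), ?_⟩
  simp only [Fintype.sum_prod_type, ← Finset.mul_sum, (hK _).2, Finset.sum_const,
    Finset.card_univ, Fintype.card_fin, nsmul_eq_mul, mul_one]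
  exact inv_mul_cancel₀ (by positivity)

lemma IsPMF.sndMarginal {P : α × β → ℝ} (hP : IsPMF P) : IsPMF fun z => ∑ a, P (a, z) :=
  ⟨fun z => Finset.sum_nonneg fun a _ => hP.1 _, by rw [← Fintype.sum_prod_type_right, hP.2]⟩

lemma IsPMF.comp_equiv {P : α → ℝ} (hP : IsPMF P) (e : β ≃ α) : IsPMF (P ∘ e) :=
  ⟨fun b => hP.1 (e b), by rw [Function.comp_def, e.sum_comp, hP.2]⟩

lemma IsPMF.pi {ι : Type*} [Fintype ι] [DecidableEq ι] {P : α → ℝ} (hP : IsPMF P) :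
    IsPMF fun f : ι → α => ∏ i, P (f i) :=
  ⟨fun f => Finset.prod_nonneg fun i _ => hP.1 _, by
    rw [← Fintype.prod_sum (fun _ => P), hP.2, Finset.prod_const_one]⟩

lemma isPMF_prodDist {X Y : Type*} [Fintype X] [Fintype Y] {π : X × Y → ℝ} (hπ : IsPMF π)
    (n : ℕ) : IsPMF (prodDist π n) :=
  (IsPMF.pi (ι := Fin n) hπ).comp_equiv (Equiv.arrowProdEquivProdArrow _ _ _).symm

end IsPMF

lemma one_sub_prSet_le_of_cover {β γ : Type*} [Fintype β] [Fintype γ] {P : β × γ → ℝ}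
    {π : γ → ℝ} (hP : IsPMF P) (hπ : IsPMF π) {B D : Set (β × γ)} {G : Set γ}
    (hcover : ∀ t ∉ B, P t ≠ 0 → t ∈ D ∨ t.2 ∈ G) :
    1 - prSet P B ≤ prSet P D + prSet π G + tvDist (fun z => ∑ b, P (b, z)) π := by
  have htv := prSet_sub_prSet_le_tvDist (P := fun z => ∑ b, P (b, z)) (Q := π)
    (by rw [hP.sndMarginal.2, hπ.2]) G
  calc 1 - prSet P B = prSet P Bᶜ := by linarith [prSet_add_prSet_compl P B, hP.2]
    _ ≤ prSet P (D ∪ {t | t.2 ∈ G}) := prSet_le_prSet_of_ne_zero hP.1 hcover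
    _ ≤ prSet P D + prSet P {t | t.2 ∈ G} := prSet_union_le hP.1 _ _
    _ ≤ _ := by rw [prSet_preimage_snd]; linarith

lemma le_exp_mul_of_log_div_lt {a b c : ℝ} (ha : 0 ≤ a) (hb : 0 ≤ b) (hc : c ≤ 0)
    (h : Real.log (a / b) < c) : a ≤ Real.exp c * b := by
  rcases ha.eq_or_lt with rfl | ha
  · positivity
  -- `log (a / 0) = 0` by convention, which `c ≤ 0` excludes
  rcases hb.eq_or_lt with rfl | hb
  · rw [div_zero, Real.log_zero] at h
    linarith
  rw [Real.log_lt_iff_lt_exp (div_pos ha hb), div_lt_iff₀ hb] at h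
  exact h.le

lemma le_exp_neg_mul_of_inv_mul_log_div_lt {n η a b : ℝ} (hn : 0 < n) (hη : 0 ≤ η)
    (ha : 0 ≤ a) (hb : 0 ≤ b) (h : n⁻¹ * Real.log (a / b) < -η) :
    a ≤ Real.exp (-(n * η)) * b := by
  rw [inv_mul_lt_iff₀ hn, mul_neg] at h
  exact le_exp_mul_of_log_div_lt ha hb (neg_nonpos.2 (by positivity)) h

lemma le_exp_neg_mul_of_lt_inv_mul_log_div {n κ a b : ℝ} (hn : 0 < n) (hκ : 0 ≤ κ)
    (ha : 0 ≤ a) (hb : 0 ≤ b) (h : κ < n⁻¹ * Real.log (b / a)) :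
    a ≤ Real.exp (-(n * κ)) * b := by
  refine le_exp_neg_mul_of_inv_mul_log_div_lt hn hκ ha hb ?_
  rw [← inv_div, Real.log_inv, mul_neg]
  exact neg_lt_neg h

lemma exp_neg_mul_le_inv_natCast {n R : ℝ} {M : ℕ} (hn : 0 < n) (hM : 0 < M)
    (hrate : n⁻¹ * Real.log M ≤ R) : Real.exp (-(n * R)) ≤ (M : ℝ)⁻¹ := by
  rw [Real.exp_neg]
  refine inv_anti₀ (by positivity) ?_
  rwa [← Real.log_le_iff_le_exp (by positivity), ← inv_mul_le_iff₀ hn]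

lemma le_exp_neg_mul_mul_inv_natCast_of_lt {n R η a b : ℝ} {M : ℕ} (hn : 0 < n) (hM : 0 < M)
    (hrate : n⁻¹ * Real.log M ≤ R) (hη : 0 ≤ η) (ha : 0 ≤ a) (hb : 0 ≤ b)
    (h : R + η < n⁻¹ * Real.log (b / a)) :
    a ≤ Real.exp (-(n * η)) * ((M : ℝ)⁻¹ * b) := by
  have hR : 0 ≤ R := (mul_nonneg (by positivity) (Real.log_natCast_nonneg M)).trans hrate
  calc a ≤ Real.exp (-(n * (R + η))) * b :=
        le_exp_neg_mul_of_lt_inv_mul_log_div hn (by positivity) ha hb h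
    _ = Real.exp (-(n * η)) * (Real.exp (-(n * R)) * b) := by
        rw [← mul_assoc, ← Real.exp_add]; ring_nf
    _ ≤ Real.exp (-(n * η)) * ((M : ℝ)⁻¹ * b) := by
        gcongr; exact exp_neg_mul_le_inv_natCast hn hM hrate

section SynthCode

variable {X Y : Type*} [Fintype X] [Fintype Y] {M n : ℕ}

lemma SynthCode.isPMF_joint (c : SynthCode X Y M n) (hM : 0 < M) : IsPMF c.joint :=
  IsPMF.uniformMixture hM fun m => (c.PX_pmf m).prod (c.PY_pmf m)

lemma SynthCode.induced_eq_sum_joint (c : SynthCode X Y M n) :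
    c.induced = fun z => ∑ m, c.joint (m, z) := by
  funext z
  simp only [SynthCode.induced, SynthCode.joint, Finset.mul_sum]

lemma SynthCode.joint_le_of_inv_mul_log_lt (c : SynthCode X Y M n) {η : ℝ} (hn : 0 < n)
    (hη : 0 ≤ η) {Qc : Fin M → (Fin n → X) × (Fin n → Y) → ℝ}
    {t : Fin M × (Fin n → X) × (Fin n → Y)} (hQc : 0 ≤ Qc t.1 t.2)
    (h : (n : ℝ)⁻¹ * Real.log (c.PX t.1 t.2.1 * c.PY t.1 t.2.2 / Qc t.1 t.2) < -η) :
    c.joint t ≤ Real.exp (-(n * η)) * ((M : ℝ)⁻¹ * Qc t.1 t.2) := by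
  rw [SynthCode.joint, mul_left_comm (Real.exp _)]
  exact mul_le_mul_of_nonneg_left (le_exp_neg_mul_of_inv_mul_log_div_lt (by positivity) hη
    (mul_nonneg ((c.PX_pmf _).1 _) ((c.PY_pmf _).1 _)) hQc h) (by positivity)

end SynthCode

theorem nonasymptotic_information_spectrum_converse_general
    {X Y : Type*} [Fintype X] [Fintype Y] (π : X × Y → ℝ) (hπ : IsPMF π)
    (n M : ℕ) (hn : 0 < n) (hM : 0 < M)
    (c : SynthCode X Y M n)
    (η R : ℝ) (hη : 0 < η)
    (hrate : (n : ℝ)⁻¹ * Real.log M ≤ R)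
    (Q : (Fin n → X) × (Fin n → Y) → ℝ) (hQ : IsPMF Q)
    (Qc : Fin M → (Fin n → X) × (Fin n → Y) → ℝ) (hQc : ∀ m, IsPMF (Qc m)) :
    let A1 : Set (Fin M × (Fin n → X) × (Fin n → Y)) :=
      { t | -η ≤ (n : ℝ)⁻¹ * Real.log (prodDist π n t.2 / Q t.2) }
    let A2 : Set (Fin M × (Fin n → X) × (Fin n → Y)) :=
      { t | -η ≤ (n : ℝ)⁻¹ * Real.log (c.PX t.1 t.2.1 * c.PY t.1 t.2.2 / Qc t.1 t.2) }
    let A3 : Set (Fin M × (Fin n → X) × (Fin n → Y)) :=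
      { t | (n : ℝ)⁻¹ * Real.log (Qc t.1 t.2 / prodDist π n t.2) ≤ R + η }
    let Atil : Set (Fin M × (Fin n → X) × (Fin n → Y)) :=
      { t | 0 < prodDist π n t.2 } ∩ { t | 0 < c.joint t }
    0 < prSet c.joint Atil →
      1 - prSet c.joint (A1 ∩ A2 ∩ A3 ∩ Atil) / prSet c.joint Atil - 3 * Real.exp (-(n * η))
        ≤ tvDist c.induced (prodDist π n) := by
  intro A1 A2 A3 Atil hAtil
  set E := Real.exp (-(n * η))
  have hn' : (0 : ℝ) < n := Nat.cast_pos.2 hn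
  have hπn := isPMF_prodDist hπ n
  have hQmix := IsPMF.uniformMixture hM hQc
  have hjoint := c.isPMF_joint hM
  set D := {t | c.joint t ≤ E * ((M : ℝ)⁻¹ * Qc t.1 t.2)}
  set G := {z | prodDist π n z ≤ E * Q z} ∪ {z | prodDist π n z ≤ E * ∑ m, (M : ℝ)⁻¹ * Qc m z}
  have hcover : ∀ t ∉ A1 ∩ A2 ∩ A3 ∩ Atil, c.joint t ≠ 0 → t ∈ D ∨ t.2 ∈ G := by
    intro t ht hjt
    simp only [Set.mem_inter_iff, not_and_or] at ht
    rcases ht with ((h1 | h2) | h3) | hnot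
    · exact Or.inr <| Or.inl <| le_exp_neg_mul_of_inv_mul_log_div_lt hn' hη.le (hπn.1 _)
        (hQ.1 _) (not_le.1 h1)
    · exact Or.inl (c.joint_le_of_inv_mul_log_lt hn hη.le ((hQc _).1 _) (not_le.1 h2))
    · refine Or.inr <| Or.inr <| (le_exp_neg_mul_mul_inv_natCast_of_lt hn' hM hrate hη.le
        (hπn.1 _) ((hQc _).1 _) (not_le.1 h3)).trans ?_
      gcongr
      exact Finset.single_le_sum (fun m _ => hQmix.1 (m, t.2)) (Finset.mem_univ t.1)
    · refine Or.inr <| Or.inl <| (le_of_not_gt fun h => hnot ⟨h, ?_⟩).trans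
        (mul_nonneg (by positivity) (hQ.1 _))
      exact (hjoint.1 t).lt_of_ne' hjt
  have hbad := one_sub_prSet_le_of_cover hjoint hπn hcover
  rw [← c.induced_eq_sum_joint] at hbad
  have hD : prSet c.joint D ≤ E := prSet_le_of_le_mul hQmix (by positivity) fun t ht => ht
  have hG : prSet (prodDist π n) G ≤ E + E :=
    (prSet_union_le hπn.1 _ _).trans <| add_le_add
      (prSet_le_of_le_mul hQ (by positivity) fun z hz => hz)
      (prSet_le_of_le_mul hQmix.sndMarginal (by positivity) fun z hz => hz)
  have hcond : prSet c.joint (A1 ∩ A2 ∩ A3 ∩ Atil) ≤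
      prSet c.joint (A1 ∩ A2 ∩ A3 ∩ Atil) / prSet c.joint Atil :=
    le_div_self (prSet_nonneg hjoint.1 _) hAtil ((prSet_le_sum hjoint.1 _).trans_eq hjoint.2)
  linarith

/-- Non-asymptotic information-spectrum converse (Lemma `fblidlossy`): if
`(1/n) log|ℳ_n| ≤ R` and `P(Ã) > 0`, then
`|P_{X^nY^n} − π^{⊗n}| ≥ 1 − P(𝒜₁ ∩ 𝒜₂ ∩ 𝒜₃ | Ã) − 3 e^{−nη}`. -/
theorem nonasymptotic_information_spectrum_converse
    {X Y : Type*} [Fintype X] [Fintype Y] (π : X × Y → ℝ) (hπ : IsPMF π)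
    (n M : ℕ) (hn : 0 < n) (hM : 0 < M)
    (c : SynthCode X Y M n)
    (η R : ℝ) (hη : 0 < η) (hR0 : 0 ≤ R)
    (hrate : (n : ℝ)⁻¹ * Real.log M ≤ R)
    (Q : (Fin n → X) × (Fin n → Y) → ℝ) (hQ : IsPMF Q)
    (Qc : Fin M → (Fin n → X) × (Fin n → Y) → ℝ) (hQc : ∀ m, IsPMF (Qc m)) :
    let A1 : Set (Fin M × (Fin n → X) × (Fin n → Y)) :=
      { t | -η ≤ (n : ℝ)⁻¹ * Real.log (prodDist π n t.2 / Q t.2) }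
    let A2 : Set (Fin M × (Fin n → X) × (Fin n → Y)) :=
      { t | -η ≤ (n : ℝ)⁻¹ * Real.log (c.PX t.1 t.2.1 * c.PY t.1 t.2.2 / Qc t.1 t.2) }
    let A3 : Set (Fin M × (Fin n → X) × (Fin n → Y)) :=
      { t | (n : ℝ)⁻¹ * Real.log (Qc t.1 t.2 / prodDist π n t.2) ≤ R + η }
    let Atil : Set (Fin M × (Fin n → X) × (Fin n → Y)) :=
      { t | 0 < prodDist π n t.2 } ∩ { t | 0 < c.joint t }
    0 < prSet c.joint Atil →
      1 - prSet c.joint (A1 ∩ A2 ∩ A3 ∩ Atil) / prSet c.joint Atil - 3 * Real.exp (-(n * η))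
        ≤ tvDist c.induced (prodDist π n) :=
  nonasymptotic_information_spectrum_converse_general π hπ n M hn hM c η R hη hrate Q hQ Qc hQc
end
end

section
/- For every α ∈ (0,1], (1/α) R^{(α)} ≤ R*; moreover, there exist a decreasing sequence α_k > 0 with α_k → 0 and a sequence c(α_k) → 0 such that (1/α_k) R^{(α_k)} ≥ R* − c(α_k) for all k; in particular lim_{k→∞} (1/α_k) R^{(α_k)} = R*. -/
/-!
Write `R^{(α)}(Q) = ᾱ A(Q) + α B(Q)` with `A = wynerDefect π = D(Q_{XY}‖π) + I(X;Y|U)` and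
`B = condKLpi π = D(Q_{XY|U}‖π|Q_U)`, both nonnegative, so that `(1/α) R^{(α)} = inf_𝒬 (λ A + B)`
with `λ = ᾱ/α`. `A` vanishes exactly on the couplings with `Q_{XY} = π` and `X − U − Y`, and there
`B = I(XY;U)`; hence each of these penalized infima is at most `R*`. As `α → 0`, i.e. `λ → ∞`, they
converge to `inf {B | A = 0} = R*`: `A` and `B` are continuous on the compact set `𝒬`, so `A` is
bounded away from zero where `B ≤ R* − ε`, and a large penalty rules those points out.
-/

open Filter

noncomputable section

/-- Relative entropy (KL divergence) between two distributions on a finite type. -/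
def klDiv {α : Type*} [Fintype α] (P Q : α → ℝ) : ℝ :=
  ∑ a ∈ Finset.univ.filter (fun a => 0 < P a), P a * Real.log (P a / Q a)

/-- The conditional relative entropy `D(Q_{XY|U} ‖ Q_{X|U} Q_{Y|U} | Q_U)`. -/
def condKLind {X Y U : Type*} [Fintype X] [Fintype Y] [Fintype U] (Q : X × Y × U → ℝ) : ℝ :=
  ∑ z ∈ Finset.univ.filter (fun z : X × Y × U => 0 < Q z),
    Q z * Real.log (Q z * margU Q z.2.2 / (margXU Q z.1 z.2.2 * margYU Q z.2.1 z.2.2))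

/-- The conditional relative entropy `D(Q_{XY|U} ‖ π_{XY} | Q_U)`. -/
def condKLpi {X Y U : Type*} [Fintype X] [Fintype Y] [Fintype U] (π : X × Y → ℝ)
    (Q : X × Y × U → ℝ) : ℝ :=
  ∑ z ∈ Finset.univ.filter (fun z : X × Y × U => 0 < Q z),
    Q z * Real.log (Q z / (margU Q z.2.2 * π (z.1, z.2.1)))

/-- `R^{(α)}(Q_{XYU}) = ᾱ (D(Q_{XY}‖π) + D(Q_{XY|U}‖Q_{X|U}Q_{Y|U}|Q_U))
       + α D(Q_{XY|U}‖π|Q_U)`. -/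
def Ralpha {X Y U : Type*} [Fintype X] [Fintype Y] [Fintype U] (π : X × Y → ℝ) (α : ℝ)
    (Q : X × Y × U → ℝ) : ℝ :=
  (1 - α) * (klDiv (fun p : X × Y => margXY Q p.1 p.2) π + condKLind Q) + α * condKLpi π Q

/-- `R^{(α)} = min_{Q_{XYU} ∈ 𝒬} R^{(α)}(Q_{XYU})`. -/
def RalphaMin {X Y : Type*} [Fintype X] [Fintype Y] (π : X × Y → ℝ) (α : ℝ) : ℝ :=
  sInf { r | ∃ Q ∈ QClass π, r = Ralpha π α Q }

open Finset Set Topology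
open Real (log log_div log_mul)
open InformationTheory (klFun klFun_apply klFun_nonneg klFun_eq_zero_iff)

section Penalty

variable {E : Type*} [TopologicalSpace E] {K : Set E} {A B : E → ℝ} {c : ℝ}

theorem sInf_penalty_le (hK : IsCompact K) (hA : ContinuousOn A K) (hB : ContinuousOn B K)
    (hc : IsGLB (B '' {x ∈ K | A x = 0}) c) (t : ℝ) :
    sInf ((fun x => t * A x + B x) '' K) ≤ c := by
  refine hc.2 ?_
  rintro _ ⟨x, ⟨hxK, hAx⟩, rfl⟩
  calc sInf ((fun x => t * A x + B x) '' K) ≤ t * A x + B x :=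
        csInf_le (hK.bddBelow_image ((continuousOn_const.mul hA).add hB)) ⟨x, hxK, rfl⟩
    _ = B x := by simp [hAx]

theorem tendsto_sInf_penalty (hK : IsCompact K) (hA : ContinuousOn A K) (hB : ContinuousOn B K)
    (hA0 : ∀ x ∈ K, 0 ≤ A x) (hc : IsGLB (B '' {x ∈ K | A x = 0}) c) :
    Tendsto (fun t => sInf ((fun x => t * A x + B x) '' K)) atTop (𝓝 c) := by
  refine tendsto_order.2 ⟨fun a ha => ?_, fun a ha =>
    .of_forall fun t => (sInf_penalty_le hK hA hB hc t).trans_lt ha⟩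
  obtain ⟨b, hab, hbc⟩ := exists_between ha
  -- on the compact set `K ∩ {B ≤ b}` the penalty `A` is bounded below by some `m > 0`
  obtain ⟨S, hS, hBS⟩ := continuousOn_iff_isClosed.1 hB (Iic b) isClosed_Iic
  have hA_pos : ∀ x ∈ K ∩ S, 0 < A x := by
    rintro x ⟨hxK, hxS⟩
    have hBx : B x ≤ b := (hBS.symm.subset ⟨hxS, hxK⟩).1
    refine (hA0 x hxK).lt_of_ne fun hAx => ?_
    linarith [hc.1 ⟨x, ⟨hxK, hAx.symm⟩, rfl⟩]
  obtain ⟨m, hm, hmA⟩ := (hK.inter_right hS).exists_forall_le' (hA.mono inter_subset_left) hA_pos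
  obtain ⟨b₀, hb₀⟩ := hK.bddBelow_image hB
  obtain ⟨_, ⟨x₀, ⟨hx₀, -⟩, -⟩⟩ := hc.nonempty
  filter_upwards [eventually_ge_atTop 0, eventually_ge_atTop ((b - b₀) / m)] with t ht₀ htm
  refine hab.trans_le (le_csInf (Set.Nonempty.image _ ⟨x₀, hx₀⟩) ?_)
  rintro _ ⟨x, hxK, rfl⟩
  have htA : 0 ≤ t * A x := mul_nonneg ht₀ (hA0 x hxK)
  by_cases hxS : x ∈ S
  · have hmt : b - b₀ ≤ t * m := (div_le_iff₀ hm).1 htm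
    have := mul_le_mul_of_nonneg_left (hmA x ⟨hxK, hxS⟩) ht₀
    linarith [hb₀ ⟨x, hxK, rfl⟩]
  · have hBx : b < B x := not_le.1 fun h => hxS (hBS.subset ⟨h, hxK⟩).1
    dsimp only
    linarith

end Penalty

section RelativeEntropy

variable {ι : Type*} [Fintype ι] {P Q : ι → ℝ}

theorem klDiv_self (P : ι → ℝ) : klDiv P P = 0 :=
  sum_eq_zero fun a ha => by simp [div_self (mem_filter.1 ha).2.ne']

theorem klDiv_eq_sum_sub (hP : ∀ a, 0 ≤ P a) (hPQ : ∀ a, 0 < P a → 0 < Q a) :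
    klDiv P Q = ∑ a, (P a * log (P a) - P a * log (Q a)) := by
  rw [klDiv, sum_filter]
  refine sum_congr rfl fun a _ => ?_
  split_ifs with ha
  · rw [log_div ha.ne' (hPQ a ha).ne', mul_sub]
  · simp [le_antisymm (not_lt.1 ha) (hP a)]

theorem klDiv_eq_sum_klFun (hP : IsPMF P) (hQ : IsPMF Q) (hPQ : ∀ a, 0 < P a → 0 < Q a) :
    klDiv P Q = ∑ a ∈ univ.filter (0 < P ·), Q a * klFun (P a / Q a) +
      ∑ a ∈ univ.filter (¬ 0 < P ·), Q a := by
  have hP1 : ∑ a ∈ univ.filter (0 < P ·), P a = 1 :=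
    (sum_filter_of_ne fun a _ h => (hP.1 a).lt_of_ne' h).trans hP.2
  have hQ1 := sum_filter_add_sum_filter_not univ (0 < P ·) Q
  have hterm : ∀ a ∈ univ.filter (0 < P ·),
      P a * log (P a / Q a) = Q a * klFun (P a / Q a) + (P a - Q a) := by
    intro a ha
    have hQa := (hPQ a (mem_filter.1 ha).2).ne'
    rw [klFun_apply]
    field_simp
    ring
  rw [klDiv, sum_congr rfl hterm, sum_add_distrib, sum_sub_distrib, hP1]
  linarith [hQ.2]

theorem klDiv_nonneg (hP : IsPMF P) (hQ : IsPMF Q) (hPQ : ∀ a, 0 < P a → 0 < Q a) :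
    0 ≤ klDiv P Q := by
  rw [klDiv_eq_sum_klFun hP hQ hPQ]
  exact add_nonneg (sum_nonneg fun a _ => mul_nonneg (hQ.1 a)
    (klFun_nonneg (div_nonneg (hP.1 a) (hQ.1 a)))) (sum_nonneg fun a _ => hQ.1 a)

theorem klDiv_eq_zero_iff (hP : IsPMF P) (hQ : IsPMF Q) (hPQ : ∀ a, 0 < P a → 0 < Q a) :
    klDiv P Q = 0 ↔ P = Q := by
  refine ⟨fun h => ?_, fun h => h ▸ klDiv_self P⟩
  have hterm : ∀ a ∈ univ.filter (0 < P ·), 0 ≤ Q a * klFun (P a / Q a) := fun a _ =>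
    mul_nonneg (hQ.1 a) (klFun_nonneg (div_nonneg (hP.1 a) (hQ.1 a)))
  have hQ0 : ∀ a ∈ univ.filter (¬ 0 < P ·), 0 ≤ Q a := fun a _ => hQ.1 a
  rw [klDiv_eq_sum_klFun hP hQ hPQ, add_eq_zero_iff_of_nonneg (sum_nonneg hterm) (sum_nonneg hQ0),
    sum_eq_zero_iff_of_nonneg hterm, sum_eq_zero_iff_of_nonneg hQ0] at h
  funext a
  by_cases ha : 0 < P a
  · have hQa := hPQ a ha
    have := h.1 a (mem_filter.2 ⟨mem_univ _, ha⟩)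
    rw [mul_eq_zero, klFun_eq_zero_iff (div_nonneg (hP.1 a) hQa.le),
      div_eq_one_iff_eq hQa.ne'] at this
    exact this.resolve_left hQa.ne'
  · rw [h.2 a (mem_filter.2 ⟨mem_univ _, ha⟩)]
    exact le_antisymm (not_lt.1 ha) (hP.1 a)

end RelativeEntropy

section Marginals

variable {X Y U : Type*} [Fintype X] [Fintype Y] [Fintype U]

theorem sum_eq_sum_sum_sum (f : X × Y × U → ℝ) : ∑ z, f z = ∑ u, ∑ x, ∑ y, f (x, y, u) := by
  rw [Fintype.sum_prod_type_right, Fintype.sum_prod_type_right]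
  exact Finset.sum_congr rfl fun _ _ => Finset.sum_comm

theorem margU_eq (Q : X × Y × U → ℝ) (u : U) : margU Q u = ∑ x, ∑ y, Q (x, y, u) :=
  Fintype.sum_prod_type _

theorem sum_mul_margU (Q : X × Y × U → ℝ) (w : U → ℝ) :
    ∑ z, Q z * w z.2.2 = ∑ u, margU Q u * w u := by
  simp only [sum_eq_sum_sum_sum, margU_eq, sum_mul]

theorem sum_mul_margXU (Q : X × Y × U → ℝ) (w : X → U → ℝ) :
    ∑ z, Q z * w z.1 z.2.2 = ∑ x, ∑ u, margXU Q x u * w x u := by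
  rw [sum_eq_sum_sum_sum, sum_comm]
  simp only [margXU, sum_mul]

theorem sum_mul_margYU (Q : X × Y × U → ℝ) (w : Y → U → ℝ) :
    ∑ z, Q z * w z.2.1 z.2.2 = ∑ y, ∑ u, margYU Q y u * w y u := by
  simp only [sum_eq_sum_sum_sum, margYU, sum_mul]
  conv_rhs => rw [Finset.sum_comm]
  exact Finset.sum_congr rfl fun _ _ => Finset.sum_comm

theorem sum_margU (Q : X × Y × U → ℝ) : ∑ u, margU Q u = ∑ z, Q z := by
  simpa using (sum_mul_margU Q 1).symm

theorem sum_margXU (Q : X × Y × U → ℝ) (u : U) : ∑ x, margXU Q x u = margU Q u :=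
  (margU_eq Q u).symm

theorem sum_margYU (Q : X × Y × U → ℝ) (u : U) : ∑ y, margYU Q y u = margU Q u := by
  rw [margU_eq, sum_comm]
  rfl

theorem sum_margXY (Q : X × Y × U → ℝ) : ∑ p : X × Y, margXY Q p.1 p.2 = ∑ z, Q z := by
  simp only [Fintype.sum_prod_type]
  rfl

variable {Q : X × Y × U → ℝ}

theorem le_margU (hQ : ∀ z, 0 ≤ Q z) (z : X × Y × U) : Q z ≤ margU Q z.2.2 :=
  single_le_sum (f := fun p : X × Y => Q (p.1, p.2, z.2.2)) (fun _ _ => hQ _)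
    (mem_univ (z.1, z.2.1))

theorem le_margXU (hQ : ∀ z, 0 ≤ Q z) (z : X × Y × U) : Q z ≤ margXU Q z.1 z.2.2 :=
  single_le_sum (f := fun y => Q (z.1, y, z.2.2)) (fun _ _ => hQ _) (mem_univ z.2.1)

theorem le_margYU (hQ : ∀ z, 0 ≤ Q z) (z : X × Y × U) : Q z ≤ margYU Q z.2.1 z.2.2 :=
  single_le_sum (f := fun x => Q (x, z.2.1, z.2.2)) (fun _ _ => hQ _) (mem_univ z.1)

theorem le_margXY (hQ : ∀ z, 0 ≤ Q z) (z : X × Y × U) : Q z ≤ margXY Q z.1 z.2.1 :=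
  single_le_sum (f := fun u => Q (z.1, z.2.1, u)) (fun _ _ => hQ _) (mem_univ z.2.2)

theorem margU_nonneg (hQ : ∀ z, 0 ≤ Q z) (u : U) : 0 ≤ margU Q u :=
  sum_nonneg fun _ _ => hQ _

theorem margXU_le_margU (hQ : ∀ z, 0 ≤ Q z) (x : X) (u : U) : margXU Q x u ≤ margU Q u :=
  sum_margXU Q u ▸ single_le_sum (f := fun x => margXU Q x u)
    (fun _ _ => sum_nonneg fun _ _ => hQ _) (mem_univ x)

theorem isPMF_margXY (hQ : IsPMF Q) : IsPMF fun p : X × Y => margXY Q p.1 p.2 :=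
  ⟨fun _ => sum_nonneg fun _ _ => hQ.1 _, (sum_margXY Q).trans hQ.2⟩

@[fun_prop]
theorem continuous_margU (u : U) : Continuous fun Q : X × Y × U → ℝ => margU Q u := by
  unfold margU; fun_prop

@[fun_prop]
theorem continuous_margXU (x : X) (u : U) : Continuous fun Q : X × Y × U → ℝ => margXU Q x u := by
  unfold margXU; fun_prop

@[fun_prop]
theorem continuous_margYU (y : Y) (u : U) : Continuous fun Q : X × Y × U → ℝ => margYU Q y u := by
  unfold margYU; fun_prop

@[fun_prop]
theorem continuous_margXY (x : X) (y : Y) : Continuous fun Q : X × Y × U → ℝ => margXY Q x y := by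
  unfold margXY; fun_prop

end Marginals

section Markov

variable {X Y U : Type*} [Fintype X] [Fintype Y] [Fintype U] {Q : X × Y × U → ℝ}

/-- `Q_U Q_{X|U} Q_{Y|U}` (`0` where `Q_U = 0`): the Markov chain `X − U − Y` with the same
`XU` and `YU` marginals. -/
def markovProj (Q : X × Y × U → ℝ) (z : X × Y × U) : ℝ :=
  margXU Q z.1 z.2.2 * margYU Q z.2.1 z.2.2 / margU Q z.2.2

theorem markovProj_pos (hQ : ∀ z, 0 ≤ Q z) {z : X × Y × U} (hz : 0 < Q z) :
    0 < markovProj Q z :=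
  div_pos (mul_pos (hz.trans_le (le_margXU hQ z)) (hz.trans_le (le_margYU hQ z)))
    (hz.trans_le (le_margU hQ z))

theorem isPMF_markovProj (hQ : IsPMF Q) : IsPMF (markovProj Q) := by
  refine ⟨fun z => div_nonneg (mul_nonneg (sum_nonneg fun _ _ => hQ.1 _)
    (sum_nonneg fun _ _ => hQ.1 _)) (sum_nonneg fun _ _ => hQ.1 _), ?_⟩
  have hfiber : ∀ u, ∑ x, ∑ y, markovProj Q (x, y, u) = margU Q u := fun u => by
    simp only [markovProj, ← sum_div, ← sum_mul_sum, sum_margXU, sum_margYU]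
    exact mul_self_div_self _
  simp only [sum_eq_sum_sum_sum (markovProj Q), hfiber, sum_margU, hQ.2]

theorem condKLind_eq_klDiv_markovProj : condKLind Q = klDiv Q (markovProj Q) :=
  Finset.sum_congr rfl fun z _ => by rw [markovProj, div_div_eq_mul_div]

theorem isMarkovXWY_iff_eq_markovProj (hQ : ∀ z, 0 ≤ Q z) :
    IsMarkovXWY Q ↔ Q = markovProj Q := by
  refine ⟨fun h => funext fun ⟨x, y, u⟩ => ?_, fun h x y u => ?_⟩
  · rcases (margU_nonneg hQ u).eq_or_lt with hU | hU
    · rw [markovProj, ← hU, div_zero]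
      exact le_antisymm (hU ▸ le_margU hQ (x, y, u)) (hQ _)
    · exact (eq_div_iff hU.ne').2 (h x y u)
  · change Q (x, y, u) * margU Q u = margXU Q x u * margYU Q y u
    rcases (margU_nonneg hQ u).eq_or_lt with hU | hU
    · have hXU : margXU Q x u = 0 :=
        le_antisymm (hU ▸ margXU_le_margU hQ x u) (sum_nonneg fun _ _ => hQ _)
      rw [← hU, hXU, mul_zero, zero_mul]
    · rw [congrFun h (x, y, u), markovProj, div_mul_cancel₀ _ hU.ne']

theorem isMarkovXWY_of_eq_mul {f : X → U → ℝ} {g : Y → U → ℝ}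
    (h : ∀ x y u, Q (x, y, u) = f x u * g y u) : IsMarkovXWY Q := by
  intro x y u
  simp only [h, Fintype.sum_prod_type, ← mul_sum, ← sum_mul]
  ring

end Markov

section Wyner

variable {X Y U : Type*} [Fintype X] [Fintype Y] [Fintype U] {π : X × Y → ℝ}
  {Q : X × Y × U → ℝ}

theorem condKLind_eq_sum_mul_log (hQ : ∀ z, 0 ≤ Q z) :
    condKLind Q = ∑ z, Q z * log (Q z) + ∑ u, margU Q u * log (margU Q u) -
      ∑ x, ∑ u, margXU Q x u * log (margXU Q x u) -
      ∑ y, ∑ u, margYU Q y u * log (margYU Q y u) := by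
  have hsplit : ∀ z, Q z * log (markovProj Q z) = Q z * log (margXU Q z.1 z.2.2) +
      Q z * log (margYU Q z.2.1 z.2.2) - Q z * log (margU Q z.2.2) := fun z => by
    rcases (hQ z).eq_or_lt with h | h
    · simp [← h]
    · rw [markovProj, log_div (mul_pos (h.trans_le (le_margXU hQ z))
        (h.trans_le (le_margYU hQ z))).ne' (h.trans_le (le_margU hQ z)).ne',
        log_mul (h.trans_le (le_margXU hQ z)).ne' (h.trans_le (le_margYU hQ z)).ne']
      ring
  rw [condKLind_eq_klDiv_markovProj, klDiv_eq_sum_sub hQ fun _ => markovProj_pos hQ]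
  simp only [hsplit, sum_sub_distrib, sum_add_distrib]
  rw [sum_mul_margU Q fun u => log (margU Q u), sum_mul_margXU Q fun x u => log (margXU Q x u),
    sum_mul_margYU Q fun y u => log (margYU Q y u)]
  ring

theorem condKLpi_eq_sum_mul_log (hQ : ∀ z, 0 ≤ Q z)
    (hsupp : ∀ x y, 0 < margXY Q x y → 0 < π (x, y)) :
    condKLpi π Q = ∑ z, Q z * log (Q z) - ∑ u, margU Q u * log (margU Q u) -
      ∑ z, Q z * log (π (z.1, z.2.1)) := by
  have hsplit : ∀ z, Q z * log (margU Q z.2.2 * π (z.1, z.2.1)) =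
      Q z * log (margU Q z.2.2) + Q z * log (π (z.1, z.2.1)) := fun z => by
    rcases (hQ z).eq_or_lt with h | h
    · simp [← h]
    · rw [log_mul (h.trans_le (le_margU hQ z)).ne'
        (hsupp _ _ (h.trans_le (le_margXY hQ z))).ne', mul_add]
  rw [condKLpi, ← klDiv, klDiv_eq_sum_sub hQ fun z h => mul_pos (h.trans_le (le_margU hQ z))
    (hsupp _ _ (h.trans_le (le_margXY hQ z)))]
  simp only [hsplit, sum_sub_distrib, sum_add_distrib]
  rw [sum_mul_margU Q fun u => log (margU Q u)]
  ring

theorem continuousOn_condKLind :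
    ContinuousOn (condKLind : (X × Y × U → ℝ) → ℝ) {Q | ∀ z, 0 ≤ Q z} :=
  (Continuous.continuousOn (by fun_prop)).congr fun _ hQ => condKLind_eq_sum_mul_log hQ

def wynerDefect (π : X × Y → ℝ) (Q : X × Y × U → ℝ) : ℝ :=
  klDiv (fun p : X × Y => margXY Q p.1 p.2) π + condKLind Q

theorem Ralpha_eq (π : X × Y → ℝ) (α : ℝ) (Q : X × Y × U → ℝ) :
    Ralpha π α Q = (1 - α) * wynerDefect π Q + α * condKLpi π Q := rfl

theorem condKLpi_nonneg (hπ : IsPMF π) (hQ : IsPMF Q)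
    (hsupp : ∀ x y, 0 < margXY Q x y → 0 < π (x, y)) : 0 ≤ condKLpi π Q := by
  refine klDiv_nonneg hQ ⟨fun z => mul_nonneg (margU_nonneg hQ.1 _) (hπ.1 _), ?_⟩
    fun z h => mul_pos (h.trans_le (le_margU hQ.1 z)) (hsupp _ _ (h.trans_le (le_margXY hQ.1 z)))
  simp only [sum_eq_sum_sum_sum fun z : X × Y × U => margU Q z.2.2 * π (z.1, z.2.1), ← mul_sum,
    ← Fintype.sum_prod_type, hπ.2, mul_one, sum_margU, hQ.2]

theorem wynerDefect_nonneg (hπ : IsPMF π) (hQ : IsPMF Q)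
    (hsupp : ∀ x y, 0 < margXY Q x y → 0 < π (x, y)) : 0 ≤ wynerDefect π Q :=
  add_nonneg (klDiv_nonneg (isPMF_margXY hQ) hπ fun p => hsupp p.1 p.2)
    (condKLind_eq_klDiv_markovProj (Q := Q) ▸
      klDiv_nonneg hQ (isPMF_markovProj hQ) fun _ => markovProj_pos hQ.1)

theorem wynerDefect_eq_zero_iff (hπ : IsPMF π) (hQ : IsPMF Q)
    (hsupp : ∀ x y, 0 < margXY Q x y → 0 < π (x, y)) :
    wynerDefect π Q = 0 ↔ (∀ x y, margXY Q x y = π (x, y)) ∧ IsMarkovXWY Q := by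
  have hXY := klDiv_nonneg (isPMF_margXY hQ) hπ fun p => hsupp p.1 p.2
  have hind := klDiv_nonneg hQ (isPMF_markovProj hQ) fun _ => markovProj_pos hQ.1
  rw [wynerDefect, condKLind_eq_klDiv_markovProj, add_eq_zero_iff_of_nonneg hXY hind,
    klDiv_eq_zero_iff (isPMF_margXY hQ) hπ fun p => hsupp p.1 p.2,
    klDiv_eq_zero_iff hQ (isPMF_markovProj hQ) fun _ => markovProj_pos hQ.1]
  exact and_congr (funext_iff.trans Prod.forall) (isMarkovXWY_iff_eq_markovProj hQ.1).symm

theorem condKLpi_eq_mutualInfoW (hQπ : ∀ x y, margXY Q x y = π (x, y)) :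
    condKLpi π Q = mutualInfoW Q :=
  Finset.sum_congr rfl fun z _ => by
    rw [mul_comm (margU Q _), ← hQπ]
    rfl

end Wyner

section DiagonalCoupling

variable {X Y U : Type*} [Fintype X] [Fintype Y] [Fintype U] [DecidableEq X] [DecidableEq Y]
  {π : X × Y → ℝ}

/-- `Q(x, y, u) = π(x, y) 𝟙{u = e(x, y)}`, written in a form that exhibits `X − U − Y`. -/
def diagCoupling (π : X × Y → ℝ) (e : X × Y ≃ U) (z : X × Y × U) : ℝ :=
  π (e.symm z.2.2) * (if (e.symm z.2.2).1 = z.1 then 1 else 0) *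
    (if (e.symm z.2.2).2 = z.2.1 then 1 else 0)

theorem margXY_diagCoupling (e : X × Y ≃ U) (x : X) (y : Y) :
    margXY (diagCoupling π e) x y = π (x, y) := by
  refine (e.symm.sum_comp fun p =>
    π p * (if p.1 = x then 1 else 0) * (if p.2 = y then 1 else 0)).trans ?_
  simp [Fintype.sum_prod_type]

theorem isPMF_diagCoupling (hπ : IsPMF π) (e : X × Y ≃ U) : IsPMF (diagCoupling π e) := by
  refine ⟨fun z => ?_, ?_⟩
  · unfold diagCoupling
    split_ifs <;> simp [hπ.1]
  · rw [← sum_margXY]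
    simpa only [margXY_diagCoupling] using hπ.2

theorem isMarkovXWY_diagCoupling (e : X × Y ≃ U) : IsMarkovXWY (diagCoupling π e) :=
  isMarkovXWY_of_eq_mul (f := fun x u => π (e.symm u) * if (e.symm u).1 = x then 1 else 0)
    (g := fun y u => if (e.symm u).2 = y then 1 else 0) fun _ _ _ => rfl

end DiagonalCoupling

section QClass

variable {X Y : Type*} [Fintype X] [Fintype Y] {π : X × Y → ℝ}

theorem continuousOn_condKLpi : ContinuousOn (condKLpi π) (QClass π) :=
  (Continuous.continuousOn (by fun_prop)).congr fun _ hQ =>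
    condKLpi_eq_sum_mul_log hQ.1.1 hQ.2

theorem continuousOn_klDiv_margXY :
    ContinuousOn (fun Q => klDiv (fun p : X × Y => margXY Q p.1 p.2) π) (QClass π) :=
  (Continuous.continuousOn (by fun_prop)).congr fun _ hQ =>
    klDiv_eq_sum_sub (fun _ => sum_nonneg fun _ _ => hQ.1.1 _) fun p => hQ.2 p.1 p.2

theorem continuousOn_wynerDefect : ContinuousOn (wynerDefect (U := Fin _) π) (QClass π) :=
  continuousOn_klDiv_margXY.add (continuousOn_condKLind.mono fun _ hQ => hQ.1.1)

theorem isCompact_QClass (π : X × Y → ℝ) : IsCompact (QClass π) := by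
  have hsupp : IsClosed {Q : X × Y × Fin (Fintype.card X * Fintype.card Y) → ℝ |
      ∀ x y, 0 < margXY Q x y → 0 < π (x, y)} := by
    simp only [ofPred_forall]
    refine isClosed_iInter fun x => isClosed_iInter fun y => ?_
    by_cases h : 0 < π (x, y)
    · simp [h]
    · simpa [h] using isClosed_le (continuous_margXY x y) continuous_const
  exact (isCompact_stdSimplex ℝ _).inter_right hsupp

theorem image_condKLpi_wynerDefect_eq_zero (hπ : IsPMF π) :
    condKLpi π '' {Q ∈ QClass π | wynerDefect π Q = 0} =
      { r | ∃ P : X × Y × Fin (Fintype.card X * Fintype.card Y) → ℝ,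
        IsPMF P ∧ (∀ x y, (∑ w, P (x, y, w)) = π (x, y)) ∧ IsMarkovXWY P ∧ r = mutualInfoW P } := by
  ext r
  constructor
  · rintro ⟨Q, ⟨hQ, hA⟩, rfl⟩
    obtain ⟨hQπ, hm⟩ := (wynerDefect_eq_zero_iff hπ hQ.1 hQ.2).1 hA
    exact ⟨Q, hQ.1, hQπ, hm, condKLpi_eq_mutualInfoW hQπ⟩
  · rintro ⟨P, hP, hPπ, hm, rfl⟩
    have hsupp : ∀ x y, 0 < margXY P x y → 0 < π (x, y) := fun x y h => hPπ x y ▸ h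
    exact ⟨P, ⟨⟨hP, hsupp⟩, (wynerDefect_eq_zero_iff hπ hP hsupp).2 ⟨hPπ, hm⟩⟩,
      condKLpi_eq_mutualInfoW hPπ⟩

theorem isGLB_CWyner (hπ : IsPMF π) :
    IsGLB (condKLpi π '' {Q ∈ QClass π | wynerDefect π Q = 0}) (CWyner π) := by
  classical
  rw [CWyner, ← image_condKLpi_wynerDefect_eq_zero hπ]
  set e := Fintype.equivFinOfCardEq (Fintype.card_prod X Y)
  have hdiag : diagCoupling π e ∈ QClass π :=
    ⟨isPMF_diagCoupling hπ e, fun x y h => by rwa [margXY_diagCoupling] at h⟩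
  have hdiag₀ : wynerDefect π (diagCoupling π e) = 0 :=
    (wynerDefect_eq_zero_iff hπ hdiag.1 hdiag.2).2
      ⟨margXY_diagCoupling e, isMarkovXWY_diagCoupling e⟩
  refine Real.isGLB_sInf ⟨_, _, ⟨hdiag, hdiag₀⟩, rfl⟩ ⟨0, ?_⟩
  rintro _ ⟨Q, ⟨hQ, -⟩, rfl⟩
  exact condKLpi_nonneg hπ hQ.1 hQ.2

end QClass

section RalphaMin

variable {X Y : Type*} [Fintype X] [Fintype Y] {π : X × Y → ℝ}

open scoped Pointwise in
theorem inv_mul_RalphaMin {α : ℝ} (hα : 0 < α) :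
    1 / α * RalphaMin π α =
      sInf ((fun Q => (1 - α) / α * wynerDefect π Q + condKLpi π Q) '' QClass π) := by
  have hset : { r | ∃ Q ∈ QClass π, r = Ralpha π α Q } =
      α • (fun Q => (1 - α) / α * wynerDefect π Q + condKLpi π Q) '' QClass π := by
    rw [← Set.image_smul, image_image]
    refine Set.ext fun r => exists_congr fun Q => and_congr_right fun _ => ?_
    simp only [Ralpha_eq, smul_eq_mul]
    rw [eq_comm]
    field_simp
  rw [RalphaMin, hset, Real.sInf_smul_of_nonneg hα.le, smul_eq_mul, ← mul_assoc,
    one_div_mul_cancel hα.ne', one_mul]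

theorem inv_mul_RalphaMin_le_CWyner (hπ : IsPMF π) {α : ℝ} (hα : 0 < α) :
    1 / α * RalphaMin π α ≤ CWyner π := by
  rw [inv_mul_RalphaMin hα]
  exact sInf_penalty_le (isCompact_QClass π) continuousOn_wynerDefect continuousOn_condKLpi
    (isGLB_CWyner hπ) _

theorem tendsto_inv_mul_RalphaMin (hπ : IsPMF π) :
    Tendsto (fun α => 1 / α * RalphaMin π α) (𝓝[>] 0) (𝓝 (CWyner π)) := by
  have hpenalty : Tendsto (fun α : ℝ => (1 - α) / α) (𝓝[>] 0) atTop := by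
    refine (tendsto_atTop_add_const_right _ (-1) tendsto_inv_nhdsGT_zero).congr' ?_
    filter_upwards [self_mem_nhdsWithin] with α (hα : 0 < α)
    field_simp
    ring
  refine ((tendsto_sInf_penalty (isCompact_QClass π) continuousOn_wynerDefect
    continuousOn_condKLpi (fun Q hQ => wynerDefect_nonneg hπ hQ.1 hQ.2)
    (isGLB_CWyner hπ)).comp hpenalty).congr' ?_
  filter_upwards [self_mem_nhdsWithin] with α hα using (inv_mul_RalphaMin hα).symm

end RalphaMin

open Filter in
/-- For every `α ∈ (0,1]`, `(1/α) R^{(α)} ≤ R*`; and there are a decreasing positive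
sequence `α_k → 0` and a sequence `c(α_k) → 0` with `(1/α_k) R^{(α_k)} ≥ R* − c(α_k)`
for all `k`; in particular `(1/α_k) R^{(α_k)} → R*`.  Here `R* = C_Wyner(X;Y)` is the
minimum of `I(XY;U)` over couplings with `|U| ≤ |X||Y|`, `P_{XY} = π` and `X − U − Y`. -/
theorem Ralpha_bounds
    {X Y : Type*} [Fintype X] [Fintype Y] (π : X × Y → ℝ) (hπ : IsPMF π) :
    (∀ α ∈ Set.Ioc (0 : ℝ) 1, (1 / α) * RalphaMin π α ≤ CWyner π) ∧
      ∃ a cseq : ℕ → ℝ, StrictAnti a ∧ (∀ k, a k ∈ Set.Ioc (0 : ℝ) 1) ∧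
        Tendsto a atTop (nhds 0) ∧ Tendsto cseq atTop (nhds 0) ∧
        (∀ k, CWyner π - cseq k ≤ (1 / a k) * RalphaMin π (a k)) ∧
        Tendsto (fun k => (1 / a k) * RalphaMin π (a k)) atTop (nhds (CWyner π)) := by
  have ha : Tendsto (fun k : ℕ => 1 / ((k : ℝ) + 1)) atTop (𝓝[>] 0) := tendsto_nhdsWithin_iff.2
    ⟨tendsto_one_div_add_atTop_nhds_zero_nat, .of_forall fun k => mem_Ioi.2 (by positivity)⟩
  have hlim := (tendsto_inv_mul_RalphaMin hπ).comp ha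
  refine ⟨fun α hα => inv_mul_RalphaMin_le_CWyner hπ hα.1, _,
    fun k => CWyner π - 1 / (1 / ((k : ℝ) + 1)) * RalphaMin π (1 / ((k : ℝ) + 1)),
    fun m n hmn => ?_, fun k => ⟨?_, ?_⟩, ha.mono_right nhdsWithin_le_nhds, ?_,
    fun k => (sub_sub_cancel _ _).le, hlim⟩
  · exact one_div_lt_one_div_of_lt (by positivity) (by simpa using hmn)
  · positivity
  · exact div_le_one_of_le₀ (by simp) (by positivity)
  · simpa using (tendsto_const_nhds (x := CWyner π)).sub hlim
end
end
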